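/- Let R be of type E_7 and set v_4 := s_1 s_3 s_4 s_5 s_2 s_4 s_3 s_6 s_5 s_4 s_1 s_2 s_3 s_7 s_6 s_5 s_4 ∈ W. Then: (1) w_{0, S∖{α_1, α_2}}(α_1) = α_1 + α_3 + α_4 + α_5 + α_6 + α_7 and v_4^{-1} w_{0, S∖{α_1}} w_{0, S∖{α_1, α_2}}(α_1) = α_5 + α_6 + α_7; (2) w_{0, S∖{α_1, α_3}}(α_1) = α_1 and v_4^{-1} w_{0, S∖{α_1}} w_{0, S∖{α_1, α_3}}(α_1) = α_1 + 2α_2 + 2α_3 + 3α_4 + 3α_5 + 2α_6 + α_7; (3) w_{0, S∖{α_1, α_4}}(α_1) = α_1 + α_3 and v_4^{-1} w_{0, S∖{α_1}} w_{0, S∖{α_1, α_4}}(α_1) = α_1 + α_2 + 2α_3 + 2α_4 + 2α_5 + 2α_6 + α_7; (4) w_{0, S∖{α_1, α_5}}(α_1) = α_1 + α_2 + α_3 + α_4 and v_4^{-1} w_{0, S∖{α_1}} w_{0, S∖{α_1, α_5}}(α_1) = α_1 + α_2 + 2α_3 + 2α_4 + 2α_5 + α_6; (5) w_{0, S∖{α_1,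 α_6}}(α_1) = α_1 + α_2 + 2α_3 + 2α_4 + α_5 and v_4^{-1} w_{0, S∖{α_1}} w_{0, S∖{α_1, α_6}}(α_1) = α_1 + α_3. -/

import Mathlib

/-!
The longest element `w_{0,J}` of a parabolic subgroup `W_J` is the only element of `W_J`
whose inverse sends every simple root of `J` to a negative root. Indeed, if `x ∈ W_J` has
this property, then `x⁻¹ w_{0,J}` sends every simple root of `J` to a positive root, because
`w_{0,J}(α_j)` is minus a nonnegative combination of simple roots of `J`; and by the exchange
condition an element of `W_J` with no descents is `1`. So every `w_{0,J}` in the statement is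
identified with an explicit word, once that property is checked in the coordinates of the
simple roots, where `s_j` acts through the Cartan matrix of `E_7`. The same coordinates then
evaluate both sides.
-/


noncomputable section

open scoped Classical

local notation "⟪" x ", " y "⟫" => @inner ℝ _ _ x y

namespace PaperFormal

variable (V : Type*) [NormedAddCommGroup V] [InnerProductSpace ℝ V] [FiniteDimensional ℝ V]

/-- The reflection of the Euclidean space `V` in the hyperplane orthogonal to `v`,
i.e. `β ↦ β - (2⟪β,v⟫/⟪v,v⟫) v`. -/
def sref (v : V) : V ≃ₗᵢ[ℝ] V := Submodule.reflection (ℝ ∙ v)ᗮ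

/-- A reduced irreducible crystallographic root system `R` in the Euclidean space `V`,
together with a fixed base of simple roots `a 1, …, a n`. -/
structure RootSystemWithBase (n : ℕ) : Type _ where
  /-- the set of roots -/
  R : Set V
  /-- the simple roots `a 1, …, a n` (values outside `{1, …, n}` are irrelevant) -/
  a : ℕ → V
  finite : R.Finite
  ne_zero : ∀ β ∈ R, β ≠ 0
  refl_mem : ∀ α ∈ R, ∀ β ∈ R, sref V α β ∈ R
  crystallographic : ∀ α ∈ R, ∀ β ∈ R, ∃ k : ℤ, 2 * ⟪β, α⟫ / ⟪α, α⟫ = (k : ℝ)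
  reduced : ∀ α ∈ R, ∀ t : ℝ, t • α ∈ R → t = 1 ∨ t = -1
  irreducible : ∀ P : Set V, (∀ x ∈ R, ∀ y ∈ R, x ∈ P → ⟪x, y⟫ ≠ 0 → y ∈ P) →
      (R ∩ P).Nonempty → R ⊆ P
  simple_mem : ∀ i ∈ Finset.Icc 1 n, a i ∈ R
  indep : LinearIndependent ℝ (fun i : (Set.Icc 1 n : Set ℕ) => a i)
  span_top : Submodule.span ℝ (a '' Set.Icc 1 n) = ⊤
  root_combo : ∀ β ∈ R, ∃ c : ℕ → ℤ, ((∀ i, 0 ≤ c i) ∨ (∀ i, c i ≤ 0)) ∧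
      β = ∑ i ∈ Finset.Icc 1 n, (c i : ℝ) • a i

namespace RootSystemWithBase

variable {V} {n : ℕ} (S : RootSystemWithBase V n)

/-- The simple reflection `s i` associated to the simple root `a i`. -/
def s (i : ℕ) : V ≃ₗᵢ[ℝ] V := sref V (S.a i)

/-- The product of the simple reflections along a list of indices
(leftmost factor acting last). -/
def prodW (l : List ℕ) : V ≃ₗᵢ[ℝ] V := (l.map S.s).prod

/-- The parabolic subgroup `W_J` of the Weyl group generated by the simple reflections
`s i` for `i ∈ J`. -/
def WJ (J : Set ℕ) : Subgroup (V ≃ₗᵢ[ℝ] V) :=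
  Subgroup.closure (S.s '' (J ∩ Set.Icc 1 n))

/-- The Weyl group `W`, generated by all simple reflections. -/
def W : Subgroup (V ≃ₗᵢ[ℝ] V) := S.WJ Set.univ

/-- The length of `w` with respect to the simple reflections indexed by `J`:
the least length of a word in these reflections expressing `w`. -/
def lenJ (J : Set ℕ) (w : V ≃ₗᵢ[ℝ] V) : ℕ :=
  sInf {k | ∃ l : List ℕ, (∀ i ∈ l, i ∈ J ∩ Set.Icc 1 n) ∧ l.length = k ∧ w = S.prodW l}

/-- The length function `ℓ` of the Weyl group. -/
def len (w : V ≃ₗᵢ[ℝ] V) : ℕ := S.lenJ Set.univ w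

/-- `w` is the longest element `w_{0,J}` of the parabolic subgroup `W_J`. -/
def IsLongest (J : Set ℕ) (w : V ≃ₗᵢ[ℝ] V) : Prop :=
  w ∈ S.WJ J ∧ ∀ x ∈ S.WJ J, S.lenJ J x ≤ S.lenJ J w

/-- `β` is a positive root (with respect to the base `a`). -/
def IsPos (β : V) : Prop :=
  β ∈ S.R ∧ ∃ c : ℕ → ℝ, (∀ i, 0 ≤ c i) ∧ β = ∑ i ∈ Finset.Icc 1 n, c i • S.a i

/-- `β` is a negative root. -/
def IsNeg (β : V) : Prop := S.IsPos (-β)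

/-- `h` is the highest root `α_0`: a root such that `h - β` is a nonnegative combination of
the simple roots for every root `β`. -/
def IsHighest (h : V) : Prop :=
  h ∈ S.R ∧ ∀ β ∈ S.R, ∃ c : ℕ → ℝ, (∀ i, 0 ≤ c i) ∧
    h - β = ∑ i ∈ Finset.Icc 1 n, c i • S.a i

/-- The root system is simply laced: all roots have the same length. -/
def SimplyLaced : Prop := ∀ α ∈ S.R, ∀ β ∈ S.R, ⟪α, α⟫ = ⟪β, β⟫

/-- `ω` is the fundamental weight `ω_r` dual to the simple root `a r`:
`⟨ω, a j⟩ = δ_{rj}` for `1 ≤ j ≤ n`. -/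
def IsFundamental (r : ℕ) (ω : V) : Prop :=
  ∀ j ∈ Finset.Icc 1 n, 2 * ⟪ω, S.a j⟫ / ⟪S.a j, S.a j⟫ = if j = r then 1 else 0

/-- A weight `ω` is minuscule: `⟨ω, β⟩ ≤ 1` for every positive root `β`. -/
def Minuscule (ω : V) : Prop := ∀ β, S.IsPos β → 2 * ⟪ω, β⟫ / ⟪β, β⟫ ≤ 1

end RootSystemWithBase

variable {V}

/-- Adjacency in the Dynkin diagram of type `E_n` (`n = 6, 7, 8`, Bourbaki labeling):
`α_2` is the branch node attached to `α_4`; `α_1, α_3, α_4, …, α_n` form a chain. -/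
def adjE (i j : ℕ) : Prop :=
  (i, j) ∈ ([(1,3),(3,4),(2,4),(4,5),(5,6),(6,7),(7,8)] : List (ℕ × ℕ)) ∨
  (j, i) ∈ ([(1,3),(3,4),(2,4),(4,5),(5,6),(6,7),(7,8)] : List (ℕ × ℕ))

/-- The element `v_4 = s_1 s_3 s_4 s_5 s_2 s_4 s_3 s_6 s_5 s_4 s_1 s_2 s_3 s_7 s_6 s_5 s_4`
of the Weyl group of `E_7`. -/
def v4E7 (S : RootSystemWithBase V 7) : V ≃ₗᵢ[ℝ] V :=
  S.prodW [1, 3, 4, 5, 2, 4, 3, 6, 5, 4, 1, 2, 3, 7, 6, 5, 4]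

section WeylGroup

variable {E : Type*} [NormedAddCommGroup E] [InnerProductSpace ℝ E]

theorem sref_apply (v x : E) : sref E v x = x - (2 * ⟪x, v⟫ / ⟪v, v⟫) • v := by
  rw [sref, Submodule.reflection_orthogonal_apply, Submodule.reflection_singleton_apply,
    real_inner_comm v x, real_inner_self_eq_norm_sq, two_smul, ← add_smul, neg_sub]
  congr 2
  simp only [RCLike.ofReal_real_eq_id, id]
  ring

theorem sref_conj (g : E ≃ₗᵢ[ℝ] E) (v : E) : sref E (g v) = g * sref E v * g⁻¹ := by
  ext x
  have hx : ⟪x, g v⟫ = ⟪g.symm x, v⟫ := by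
    rw [← g.inner_map_map (g.symm x) v, g.apply_symm_apply]
  simp only [LinearIsometryEquiv.coe_mul, Function.comp_apply, sref_apply, map_sub, map_smul,
    LinearIsometryEquiv.coe_inv, g.apply_symm_apply, hx, g.inner_map_map]

namespace RootSystemWithBase

variable {n : ℕ} (S : RootSystemWithBase E n)

theorem s_apply (i : ℕ) (x : E) : S.s i x = x - (2 * ⟪x, S.a i⟫ / ⟪S.a i, S.a i⟫) • S.a i :=
  sref_apply _ _

theorem s_apply_a_self (i : ℕ) : S.s i (S.a i) = -S.a i :=
  Submodule.reflection_orthogonalComplement_singleton_eq_neg _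

theorem s_mul_self (i : ℕ) : S.s i * S.s i = 1 := Submodule.reflection_mul_reflection _

theorem s_inv (i : ℕ) : (S.s i)⁻¹ = S.s i := inv_eq_of_mul_eq_one_right (S.s_mul_self i)

@[simp] theorem prodW_nil : S.prodW [] = 1 := rfl

@[simp] theorem prodW_cons (i : ℕ) (l : List ℕ) : S.prodW (i :: l) = S.s i * S.prodW l := by
  simp [prodW]

@[simp] theorem prodW_append (l₁ l₂ : List ℕ) :
    S.prodW (l₁ ++ l₂) = S.prodW l₁ * S.prodW l₂ := by
  simp [prodW]

theorem prodW_append_apply (l₁ l₂ : List ℕ) (x : E) :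
    S.prodW (l₁ ++ l₂) x = S.prodW l₁ (S.prodW l₂ x) := by
  rw [prodW_append, LinearIsometryEquiv.coe_mul, Function.comp_apply]

theorem inv_prodW (l : List ℕ) : (S.prodW l)⁻¹ = S.prodW l.reverse := by
  induction l with
  | nil => simp
  | cons i l ih => simp [ih, s_inv]

theorem prodW_mem_WJ {J : Set ℕ} {l : List ℕ} (hl : ∀ i ∈ l, i ∈ J ∩ Set.Icc 1 n) :
    S.prodW l ∈ S.WJ J := by
  induction l with
  | nil => exact one_mem _
  | cons i l ih =>
    rw [prodW_cons]
    exact mul_mem (Subgroup.subset_closure ⟨i, hl i (by simp), rfl⟩)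
      (ih fun j hj => hl j (by simp [hj]))

theorem exists_prodW_of_mem_WJ {J : Set ℕ} {w : E ≃ₗᵢ[ℝ] E} (hw : w ∈ S.WJ J) :
    ∃ l : List ℕ, (∀ i ∈ l, i ∈ J ∩ Set.Icc 1 n) ∧ w = S.prodW l := by
  induction hw using Subgroup.closure_induction with
  | mem x hx =>
    obtain ⟨i, hi, rfl⟩ := hx
    exact ⟨[i], by simpa using hi, by simp⟩
  | one => exact ⟨[], by simp, rfl⟩
  | mul x y _ _ hx hy =>
    obtain ⟨l₁, h₁, rfl⟩ := hx
    obtain ⟨l₂, h₂, rfl⟩ := hy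
    refine ⟨l₁ ++ l₂, fun i hi => ?_, (S.prodW_append l₁ l₂).symm⟩
    rcases List.mem_append.mp hi with h | h
    exacts [h₁ i h, h₂ i h]
  | inv x _ hx =>
    obtain ⟨l, h, rfl⟩ := hx
    exact ⟨l.reverse, fun i hi => h i (List.mem_reverse.mp hi), S.inv_prodW l⟩

theorem lenJ_le {J : Set ℕ} {l : List ℕ} (hl : ∀ i ∈ l, i ∈ J ∩ Set.Icc 1 n) :
    S.lenJ J (S.prodW l) ≤ l.length :=
  Nat.sInf_le ⟨l, hl, rfl, rfl⟩

theorem exists_reduced_word {J : Set ℕ} {w : E ≃ₗᵢ[ℝ] E} (hw : w ∈ S.WJ J) :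
    ∃ l : List ℕ, (∀ i ∈ l, i ∈ J ∩ Set.Icc 1 n) ∧ w = S.prodW l ∧
      l.length = S.lenJ J w := by
  obtain ⟨l₀, h₀, hw₀⟩ := S.exists_prodW_of_mem_WJ hw
  obtain ⟨l, hl, hlen, hwl⟩ := Nat.sInf_mem (⟨l₀.length, l₀, h₀, rfl, hw₀⟩ :
    {k | ∃ l : List ℕ, (∀ i ∈ l, i ∈ J ∩ Set.Icc 1 n) ∧ l.length = k ∧ w = S.prodW l}.Nonempty)
  exact ⟨l, hl, hwl, hlen⟩

theorem prodW_mem_R {l : List ℕ} (hl : ∀ i ∈ l, i ∈ Set.Icc 1 n) {β : E} (hβ : β ∈ S.R) :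
    S.prodW l β ∈ S.R := by
  induction l with
  | nil => exact hβ
  | cons i l ih =>
    exact S.refl_mem _ (S.simple_mem i (Finset.mem_Icc.2 (hl i (by simp))))
      _ (ih fun j hj => hl j (by simp [hj]))

theorem apply_mem_R_of_mem_WJ {J : Set ℕ} {w : E ≃ₗᵢ[ℝ] E} (hw : w ∈ S.WJ J) {β : E}
    (hβ : β ∈ S.R) : w β ∈ S.R := by
  obtain ⟨l, hl, rfl⟩ := S.exists_prodW_of_mem_WJ hw
  exact S.prodW_mem_R (fun i hi => (hl i hi).2) hβ

theorem neg_mem_R {β : E} (hβ : β ∈ S.R) : -β ∈ S.R := by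
  simpa [sref, Submodule.reflection_orthogonalComplement_singleton_eq_neg] using
    S.refl_mem β hβ β hβ

def combo (c : ℕ → ℝ) : E := ∑ i ∈ Finset.Icc 1 n, c i • S.a i

def IsNonnegCombo (β : E) : Prop := ∃ c : ℕ → ℝ, (∀ i, 0 ≤ c i) ∧ β = S.combo c

theorem isPos_iff {β : E} : S.IsPos β ↔ β ∈ S.R ∧ S.IsNonnegCombo β := Iff.rfl

theorem isNeg_iff {β : E} : S.IsNeg β ↔ -β ∈ S.R ∧ S.IsNonnegCombo (-β) := Iff.rfl

theorem isNeg_neg {β : E} : S.IsNeg (-β) ↔ S.IsPos β := by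
  rw [IsNeg, neg_neg]

theorem combo_congr {c d : ℕ → ℝ} (h : ∀ i ∈ Finset.Icc 1 n, c i = d i) :
    S.combo c = S.combo d :=
  Finset.sum_congr rfl fun i hi => by rw [h i hi]

theorem combo_sub (c d : ℕ → ℝ) : S.combo (c - d) = S.combo c - S.combo d := by
  simp only [combo, Pi.sub_apply, sub_smul, Finset.sum_sub_distrib]

theorem combo_neg (c : ℕ → ℝ) : S.combo (-c) = -S.combo c := by
  simp only [combo, Pi.neg_apply, neg_smul, Finset.sum_neg_distrib]

theorem combo_single {i : ℕ} (hi : i ∈ Finset.Icc 1 n) (t : ℝ) :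
    S.combo (Pi.single i t) = t • S.a i := by
  rw [combo, Finset.sum_eq_single_of_mem i hi fun k _ hk => by simp [hk], Pi.single_eq_same]

theorem eq_of_combo_eq {c d : ℕ → ℝ} (h : S.combo c = S.combo d) :
    ∀ i ∈ Finset.Icc 1 n, c i = d i := by
  have hsum : ∑ i : Set.Icc 1 n, (c i - d i) • S.a i = 0 := by
    rw [Finset.sum_set_coe (f := fun i => (c i - d i) • S.a i), Set.toFinset_Icc]
    exact (S.combo_sub c d).trans (sub_eq_zero.2 h)
  intro i hi
  exact sub_eq_zero.1 (Fintype.linearIndependent_iff.1 S.indep _ hsum ⟨i, Finset.mem_Icc.1 hi⟩)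

theorem isNonnegCombo_combo {c : ℕ → ℝ} (hc : ∀ i ∈ Finset.Icc 1 n, 0 ≤ c i) :
    S.IsNonnegCombo (S.combo c) := by
  refine ⟨fun i => if i ∈ Finset.Icc 1 n then c i else 0, fun i => ?_,
    S.combo_congr fun i hi => (if_pos hi).symm⟩
  dsimp only
  split_ifs with hi
  exacts [hc i hi, le_rfl]

theorem isNonnegCombo_zero : S.IsNonnegCombo 0 :=
  ⟨0, fun _ => le_rfl, by simp [combo]⟩

theorem IsNonnegCombo.add {S : RootSystemWithBase E n} {β γ : E} (hβ : S.IsNonnegCombo β)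
    (hγ : S.IsNonnegCombo γ) : S.IsNonnegCombo (β + γ) := by
  obtain ⟨c, hc, rfl⟩ := hβ
  obtain ⟨d, hd, rfl⟩ := hγ
  refine ⟨c + d, fun i => add_nonneg (hc i) (hd i), ?_⟩
  simp only [combo, Pi.add_apply, add_smul, Finset.sum_add_distrib]

theorem IsNonnegCombo.smul {S : RootSystemWithBase E n} {β : E} (hβ : S.IsNonnegCombo β)
    {t : ℝ} (ht : 0 ≤ t) : S.IsNonnegCombo (t • β) := by
  obtain ⟨c, hc, rfl⟩ := hβ
  refine ⟨t • c, fun i => mul_nonneg ht (hc i), ?_⟩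
  simp only [combo, Finset.smul_sum, Pi.smul_apply, smul_eq_mul, mul_smul]

theorem isPos_a {i : ℕ} (hi : i ∈ Finset.Icc 1 n) : S.IsPos (S.a i) :=
  ⟨S.simple_mem i hi, Pi.single i 1, fun k => by by_cases hk : k = i <;> simp [hk],
    by rw [← combo, combo_single S hi, one_smul]⟩

theorem isPos_or_isNeg {β : E} (hβ : β ∈ S.R) : S.IsPos β ∨ S.IsNeg β := by
  obtain ⟨c, hc | hc, rfl⟩ := S.root_combo β hβ
  · exact Or.inl ⟨hβ, fun i => c i, fun i => Int.cast_nonneg (hc i), rfl⟩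
  · refine Or.inr ⟨S.neg_mem_R hβ, fun i => -c i, fun i => ?_, ?_⟩
    · simpa using hc i
    · simp [Finset.sum_neg_distrib]

theorem not_isNeg_of_isPos {β : E} (hpos : S.IsPos β) : ¬ S.IsNeg β := by
  intro hneg
  obtain ⟨-, d, hd, hdβ⟩ := S.isNeg_iff.1 hneg
  obtain ⟨hβ, c, hc, rfl⟩ := S.isPos_iff.1 hpos
  have hcd := S.eq_of_combo_eq (c := c) (d := -d) (by rw [combo_neg, ← hdβ, neg_neg])
  refine S.ne_zero _ hβ (Finset.sum_eq_zero fun i hi => ?_)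
  have : c i = 0 := le_antisymm (by linarith [hcd i hi, hd i, Pi.neg_apply d i]) (hc i)
  simp [this]

theorem s_combo {j : ℕ} (hj : j ∈ Finset.Icc 1 n) (c : ℕ → ℝ) :
    S.s j (S.combo c) =
      S.combo (c - Pi.single j (2 * ⟪S.combo c, S.a j⟫ / ⟪S.a j, S.a j⟫)) := by
  rw [s_apply, combo_sub, combo_single S hj]

theorem eq_a_of_isPos_of_isNeg_s {i : ℕ} (hi : i ∈ Finset.Icc 1 n) {β : E}
    (hpos : S.IsPos β) (hneg : S.IsNeg (S.s i β)) : β = S.a i := by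
  obtain ⟨hβ, c, hc, rfl⟩ := S.isPos_iff.1 hpos
  obtain ⟨-, d, hd, hdβ⟩ := S.isNeg_iff.1 hneg
  set t := 2 * ⟪S.combo c, S.a i⟫ / ⟪S.a i, S.a i⟫
  have hcd := S.eq_of_combo_eq (c := c - Pi.single i t) (d := -d)
    (by rw [combo_neg, ← hdβ, neg_neg, s_combo S hi])
  have hβi : S.combo c = c i • S.a i := by
    refine Finset.sum_eq_single_of_mem i hi fun k hk hki => ?_
    have := hcd k hk
    simp only [Pi.sub_apply, Pi.single_eq_of_ne hki, sub_zero, Pi.neg_apply] at this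
    simp [le_antisymm (by linarith [hd k]) (hc k)]
  rw [hβi] at hβ ⊢
  rcases S.reduced _ (S.simple_mem i hi) _ hβ with h | h
  · rw [h, one_smul]
  · linarith [hc i]

theorem isNonnegCombo_neg_map (g : E ≃ₗᵢ[ℝ] E) {c : ℕ → ℝ} (hc : ∀ i, 0 ≤ c i)
    (hg : ∀ i ∈ Finset.Icc 1 n, c i ≠ 0 → S.IsNonnegCombo (-g (S.a i))) :
    S.IsNonnegCombo (-g (S.combo c)) := by
  rw [combo, map_sum, ← Finset.sum_neg_distrib]
  refine Finset.sum_induction _ S.IsNonnegCombo (fun _ _ => IsNonnegCombo.add)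
    S.isNonnegCombo_zero fun i hi => ?_
  rw [map_smul, ← smul_neg]
  by_cases hci : c i = 0
  · simpa [hci] using S.isNonnegCombo_zero
  · exact (hg i hi hci).smul (hc i)

theorem exists_sublist_prodW_mul_s {l : List ℕ} (hl : ∀ i ∈ l, i ∈ Set.Icc 1 n) {j : ℕ}
    (hj : j ∈ Finset.Icc 1 n) (hneg : S.IsNeg (S.prodW l (S.a j))) :
    ∃ l', l'.Sublist l ∧ l'.length + 1 = l.length ∧ S.prodW l * S.s j = S.prodW l' := by
  induction l with
  | nil => exact absurd (by simpa using hneg) (S.not_isNeg_of_isPos (S.isPos_a hj))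
  | cons i l ih =>
    have hl' : ∀ k ∈ l, k ∈ Set.Icc 1 n := fun k hk => hl k (by simp [hk])
    rcases S.isPos_or_isNeg (S.prodW_mem_R hl' (S.simple_mem j hj)) with hpos | hneg'
    · have hβ : S.prodW l (S.a j) = S.a i :=
        S.eq_a_of_isPos_of_isNeg_s (Finset.mem_Icc.2 (hl i (by simp))) hpos (by simpa using hneg)
      have hconj : S.s i = S.prodW l * S.s j * (S.prodW l)⁻¹ := by
        rw [s, ← hβ, sref_conj]
        rfl
      refine ⟨l, List.sublist_cons_self i l, rfl, ?_⟩
      rw [prodW_cons, hconj]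
      simp only [mul_assoc, inv_mul_cancel_left, s_mul_self, mul_one]
    · obtain ⟨l', hsub, hlen, heq⟩ := ih hl' hneg'
      exact ⟨i :: l', hsub.cons_cons i, by simp [hlen],
        by rw [prodW_cons, mul_assoc, heq, prodW_cons]⟩

theorem lenJ_prodW_mul_s_lt {J : Set ℕ} {l : List ℕ} (hl : ∀ i ∈ l, i ∈ J ∩ Set.Icc 1 n)
    {j : ℕ} (hj : j ∈ J ∩ Set.Icc 1 n) (hneg : S.IsNeg (S.prodW l (S.a j))) :
    S.lenJ J (S.prodW l * S.s j) < l.length := by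
  obtain ⟨l', hsub, hlen, heq⟩ :=
    S.exists_sublist_prodW_mul_s (fun i hi => (hl i hi).2) (Finset.mem_Icc.2 hj.2) hneg
  rw [heq]
  exact (S.lenJ_le fun i hi => hl i (hsub.subset hi)).trans_lt (by omega)

theorem isNeg_apply_a_of_isLongest {J : Set ℕ} {w : E ≃ₗᵢ[ℝ] E} (hw : S.IsLongest J w)
    {j : ℕ} (hj : j ∈ J ∩ Set.Icc 1 n) : S.IsNeg (w (S.a j)) := by
  refine (S.isPos_or_isNeg (S.apply_mem_R_of_mem_WJ hw.1
    (S.simple_mem j (Finset.mem_Icc.2 hj.2)))).resolve_left fun hpos => ?_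
  have hws : w * S.s j ∈ S.WJ J := mul_mem hw.1 (Subgroup.subset_closure ⟨j, hj, rfl⟩)
  obtain ⟨l, hl, hwl, hlen⟩ := S.exists_reduced_word hws
  have hneg : S.IsNeg (S.prodW l (S.a j)) := by
    rwa [← hwl, LinearIsometryEquiv.coe_mul, Function.comp_apply, s_apply_a_self, map_neg,
      isNeg_neg]
  have hlt := S.lenJ_prodW_mul_s_lt hl hj hneg
  rw [← hwl, mul_assoc, s_mul_self, mul_one] at hlt
  have := hw.2 _ hws
  omega

theorem eq_one_of_forall_isPos {J : Set ℕ} {u : E ≃ₗᵢ[ℝ] E} (hu : u ∈ S.WJ J)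
    (h : ∀ j ∈ J ∩ Set.Icc 1 n, S.IsPos (u (S.a j))) : u = 1 := by
  obtain ⟨l, hl, rfl, hlen⟩ := S.exists_reduced_word hu
  rcases l.eq_nil_or_concat with rfl | ⟨l', j, rfl⟩
  · rfl
  exfalso
  have hsplit : S.prodW (l'.concat j) = S.prodW l' * S.s j := by simp
  simp only [List.concat_eq_append, List.mem_append, List.mem_singleton] at hl
  have hj := hl j (Or.inr rfl)
  have hneg : S.IsNeg (S.prodW l' (S.a j)) := by
    simpa [hsplit, s_apply_a_self, IsNeg] using h j hj
  have hlt := S.lenJ_prodW_mul_s_lt (fun i hi => hl i (Or.inl hi)) hj hneg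
  rw [← hsplit, ← hlen, List.length_concat] at hlt
  omega

theorem exists_combo_of_mem_WJ {J : Set ℕ} {w : E ≃ₗᵢ[ℝ] E} (hw : w ∈ S.WJ J) {j : ℕ}
    (hj : j ∈ J ∩ Set.Icc 1 n) : ∃ c : ℕ → ℝ, (∀ i ∉ J, c i = 0) ∧ w (S.a j) = S.combo c := by
  obtain ⟨l, hl, rfl⟩ := S.exists_prodW_of_mem_WJ hw
  clear hw
  induction l with
  | nil =>
    refine ⟨Pi.single j 1, fun i hi => ?_, by simp [combo_single S (Finset.mem_Icc.2 hj.2)]⟩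
    exact Pi.single_eq_of_ne (ne_of_mem_of_not_mem hj.1 hi).symm _
  | cons i l ih =>
    obtain ⟨c, hc, hcw⟩ := ih fun k hk => hl k (by simp [hk])
    have hi := hl i (by simp)
    refine ⟨_, fun k hk => ?_, by
      rw [prodW_cons, LinearIsometryEquiv.coe_mul, Function.comp_apply, hcw,
        s_combo S (Finset.mem_Icc.2 hi.2)]⟩
    rw [Pi.sub_apply, hc k hk, Pi.single_eq_of_ne (ne_of_mem_of_not_mem hi.1 hk).symm, sub_zero]

theorem isLongest_eq_prodW {J : Set ℕ} {w : E ≃ₗᵢ[ℝ] E} (hw : S.IsLongest J w) {l : List ℕ}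
    (hl : ∀ i ∈ l, i ∈ J ∩ Set.Icc 1 n)
    (hneg : ∀ j ∈ J ∩ Set.Icc 1 n, S.IsNeg ((S.prodW l)⁻¹ (S.a j))) : w = S.prodW l := by
  have hu : (S.prodW l)⁻¹ * w ∈ S.WJ J := mul_mem (inv_mem (S.prodW_mem_WJ hl)) hw.1
  refine (inv_mul_eq_one.1 (S.eq_one_of_forall_isPos hu fun j hj => ?_)).symm
  obtain ⟨-, d, hd, hwd⟩ := S.isNeg_iff.1 (S.isNeg_apply_a_of_isLongest hw hj)
  obtain ⟨c, hc, hwc⟩ := S.exists_combo_of_mem_WJ hw.1 hj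
  have hdc := S.eq_of_combo_eq (c := d) (d := -c) (by rw [← hwd, hwc, combo_neg])
  have hsupp : ∀ i ∈ Finset.Icc 1 n, d i ≠ 0 → i ∈ J ∩ Set.Icc 1 n := fun i hi hdi =>
    ⟨by_contra fun hiJ => hdi (by rw [hdc i hi, Pi.neg_apply, hc i hiJ, neg_zero]),
      Finset.mem_Icc.1 hi⟩
  refine S.isPos_iff.2 ⟨S.apply_mem_R_of_mem_WJ hu (S.simple_mem j (Finset.mem_Icc.2 hj.2)), ?_⟩
  rw [LinearIsometryEquiv.coe_mul, Function.comp_apply, ← neg_neg (w (S.a j)), hwd, map_neg]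
  exact S.isNonnegCombo_neg_map _ hd fun i hi hdi => (S.isNeg_iff.1 (hneg i (hsupp i hi hdi))).2

end RootSystemWithBase

end WeylGroup

section Coordinates

/- Position `i` of a coordinate list holds the coefficient of the simple root `a i`;
position `0` is padding. -/

def reflectCoords (n : ℕ) (C : ℕ → ℕ → ℤ) (j : ℕ) (L : List ℤ) : List ℤ :=
  (List.range (n + 1)).map fun i =>
    L.getD i 0 - if i = j then ∑ k ∈ Finset.Icc 1 n, L.getD k 0 * C k j else 0

def wordCoords (n : ℕ) (C : ℕ → ℕ → ℤ) (l : List ℕ) (L : List ℤ) : List ℤ :=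
  l.foldr (reflectCoords n C) L

def simpleCoords (n j : ℕ) : List ℤ :=
  (List.range (n + 1)).map fun i => if i = j then 1 else 0

theorem getD_map_range {n i : ℕ} (hi : i ≤ n) (f : ℕ → ℤ) :
    ((List.range (n + 1)).map f).getD i 0 = f i := by
  simp [List.getD_eq_getElem?_getD, Nat.lt_succ_of_le hi]

variable {E : Type*} [NormedAddCommGroup E] [InnerProductSpace ℝ E]

namespace RootSystemWithBase

variable {n : ℕ} (S : RootSystemWithBase E n)

def HasCartanMatrix (C : ℕ → ℕ → ℤ) : Prop :=
  ∀ i ∈ Finset.Icc 1 n, ∀ j ∈ Finset.Icc 1 n, 2 * ⟪S.a i, S.a j⟫ / ⟪S.a j, S.a j⟫ = C i j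

def ofCoords (L : List ℤ) : E := S.combo fun i => (L.getD i 0 : ℝ)

theorem ofCoords_simpleCoords {j : ℕ} (hj : j ∈ Finset.Icc 1 n) :
    S.ofCoords (simpleCoords n j) = S.a j := by
  calc S.ofCoords (simpleCoords n j) = S.combo (Pi.single j 1) :=
        S.combo_congr fun i hi => by
          rw [simpleCoords, getD_map_range (Finset.mem_Icc.1 hi).2]
          by_cases h : i = j <;> simp [h]
    _ = S.a j := by rw [combo_single S hj, one_smul]

theorem s_ofCoords {C : ℕ → ℕ → ℤ} (hC : S.HasCartanMatrix C) {j : ℕ}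
    (hj : j ∈ Finset.Icc 1 n) (L : List ℤ) :
    S.s j (S.ofCoords L) = S.ofCoords (reflectCoords n C j L) := by
  have hpair : 2 * ⟪S.combo fun i => (L.getD i 0 : ℝ), S.a j⟫ / ⟪S.a j, S.a j⟫ =
      ∑ k ∈ Finset.Icc 1 n, (L.getD k 0 : ℝ) * C k j := by
    rw [combo, sum_inner, Finset.mul_sum, Finset.sum_div]
    refine Finset.sum_congr rfl fun k hk => ?_
    rw [real_inner_smul_left, ← hC k hk j hj]
    ring
  rw [ofCoords, s_combo S hj, hpair]
  refine S.combo_congr fun i hi => ?_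
  rw [reflectCoords, getD_map_range (Finset.mem_Icc.1 hi).2]
  by_cases h : i = j
  · subst h; simp
  · simp [h]

theorem prodW_ofCoords {C : ℕ → ℕ → ℤ} (hC : S.HasCartanMatrix C) {l : List ℕ}
    (hl : ∀ i ∈ l, i ∈ Finset.Icc 1 n) (L : List ℤ) :
    S.prodW l (S.ofCoords L) = S.ofCoords (wordCoords n C l L) := by
  induction l with
  | nil => rfl
  | cons i l ih =>
    rw [prodW_cons, LinearIsometryEquiv.coe_mul, Function.comp_apply,
      ih fun k hk => hl k (by simp [hk]), s_ofCoords S hC (hl i (by simp))]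
    rfl

theorem prodW_apply_a {C : ℕ → ℕ → ℤ} (hC : S.HasCartanMatrix C) {l : List ℕ}
    (hl : ∀ i ∈ l, i ∈ Finset.Icc 1 n) {j : ℕ} (hj : j ∈ Finset.Icc 1 n) :
    S.prodW l (S.a j) = S.ofCoords (wordCoords n C l (simpleCoords n j)) := by
  rw [← S.prodW_ofCoords hC hl, S.ofCoords_simpleCoords hj]

theorem isNeg_prodW_apply_a {C : ℕ → ℕ → ℤ} (hC : S.HasCartanMatrix C) {l : List ℕ}
    (hl : ∀ i ∈ l, i ∈ Finset.Icc 1 n) {j : ℕ} (hj : j ∈ Finset.Icc 1 n)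
    (hneg : ∀ i ∈ Finset.Icc 1 n, (wordCoords n C l (simpleCoords n j)).getD i 0 ≤ 0) :
    S.IsNeg (S.prodW l (S.a j)) := by
  refine S.isNeg_iff.2 ⟨S.neg_mem_R (S.prodW_mem_R (fun i hi => Finset.mem_Icc.1 (hl i hi))
    (S.simple_mem j hj)), ?_⟩
  rw [S.prodW_apply_a hC hl hj, ofCoords, ← combo_neg]
  exact S.isNonnegCombo_combo fun i hi => by simpa using hneg i hi

theorem isLongest_eq_prodW_of_coords {C : ℕ → ℕ → ℤ} (hC : S.HasCartanMatrix C)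
    {T : Finset ℕ} (hT : T ⊆ Finset.Icc 1 n) {w : E ≃ₗᵢ[ℝ] E} (hw : S.IsLongest T w)
    {l : List ℕ} (hl : ∀ i ∈ l, i ∈ T)
    (hneg : ∀ j ∈ T, ∀ i ∈ Finset.Icc 1 n,
      (wordCoords n C l.reverse (simpleCoords n j)).getD i 0 ≤ 0) :
    w = S.prodW l := by
  refine S.isLongest_eq_prodW hw (fun i hi => ⟨hl i hi, Finset.mem_Icc.1 (hT (hl i hi))⟩)
    fun j hj => ?_
  rw [inv_prodW]
  exact S.isNeg_prodW_apply_a hC (fun i hi => hT (hl i (List.mem_reverse.1 hi))) (hT hj.1)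
    (hneg j hj.1)

end RootSystemWithBase

end Coordinates

section CartanE7

/- Local, so that `adjE` in hypotheses keeps the classical instance used by the statement. -/
local instance : DecidableRel adjE := fun _ _ => inferInstanceAs (Decidable (_ ∨ _))

def cartanE7 (i j : ℕ) : ℤ := if i = j then 2 else if adjE i j then -1 else 0

end CartanE7

section E7

/- Reduced words for `w_{0, S∖{α_1}}` (type `D_6`) and, for `2 ≤ k ≤ 6`, for
`w_{0, S∖{α_1, α_k}}`; `isLongest_eq_prodW_of_coords` certifies them. -/

def w0WordD6 : List ℕ :=
  [2, 3, 5, 7, 4, 6, 2, 3, 5, 7, 4, 6, 2, 3, 5, 7, 4, 6, 2, 3, 5, 7, 4, 6, 2, 3, 5, 7, 4, 6]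

def w0Word : ℕ → List ℕ
  | 2 => [3, 4, 3, 5, 4, 3, 6, 5, 4, 3, 7, 6, 5, 4, 3]
  | 3 => [2, 4, 2, 5, 4, 2, 6, 5, 4, 2, 7, 6, 5, 4, 2]
  | 4 => [2, 3, 5, 6, 5, 7, 6, 5]
  | 5 => [2, 4, 2, 3, 4, 2, 6, 7, 6]
  | 6 => [2, 3, 5, 4, 2, 3, 5, 4, 2, 3, 5, 4, 7]
  | _ => []

def v4Word : List ℕ := [1, 3, 4, 5, 2, 4, 3, 6, 5, 4, 1, 2, 3, 7, 6, 5, 4]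

variable {E : Type*} [NormedAddCommGroup E] [InnerProductSpace ℝ E]

namespace RootSystemWithBase

variable (S : RootSystemWithBase E 7)

theorem hasCartanMatrix_cartanE7
    (hE : ∀ i ∈ Finset.Icc 1 7, ∀ j ∈ Finset.Icc 1 7,
      ⟪S.a i, S.a j⟫ = if i = j then 2 else if adjE i j then -1 else 0) :
    S.HasCartanMatrix cartanE7 := by
  intro i hi j hj
  rw [hE i hi j hj, hE j hj j hj, if_pos rfl, cartanE7]
  split_ifs <;> norm_num

theorem ofCoords_E7 (c₀ c₁ c₂ c₃ c₄ c₅ c₆ c₇ : ℤ) :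
    S.ofCoords [c₀, c₁, c₂, c₃, c₄, c₅, c₆, c₇] =
      (c₁ : ℝ) • S.a 1 + (c₂ : ℝ) • S.a 2 + (c₃ : ℝ) • S.a 3 + (c₄ : ℝ) • S.a 4 +
        (c₅ : ℝ) • S.a 5 + (c₆ : ℝ) • S.a 6 + (c₇ : ℝ) • S.a 7 := by
  simp [ofCoords, combo, Finset.sum_Icc_succ_top]

set_option maxRecDepth 10000 in
theorem apply_a_one_eq_ofCoords {w0a w0b : E ≃ₗᵢ[ℝ] E} (hC : S.HasCartanMatrix cartanE7)
    (hw0a : S.IsLongest (Set.Icc 1 7 \ {1}) w0a) {k : ℕ} (hk : k ∈ Finset.Icc 2 6)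
    (hw0b : S.IsLongest (Set.Icc 1 7 \ {1, k}) w0b) {L₁ L₂ : List ℤ}
    (h₁ : wordCoords 7 cartanE7 (w0Word k) (simpleCoords 7 1) = L₁)
    (h₂ : wordCoords 7 cartanE7 (v4Word.reverse ++ w0WordD6 ++ w0Word k)
      (simpleCoords 7 1) = L₂) :
    w0b (S.a 1) = S.ofCoords L₁ ∧ (v4E7 S)⁻¹ (w0a (w0b (S.a 1))) = S.ofCoords L₂ := by
  have hwords : ∀ k ∈ Finset.Icc 2 6, (∀ i ∈ w0Word k, i ∈ Finset.Icc 1 7 \ {1, k}) ∧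
      ∀ j ∈ Finset.Icc 1 7 \ {1, k}, ∀ i ∈ Finset.Icc 1 7,
        (wordCoords 7 cartanE7 (w0Word k).reverse (simpleCoords 7 j)).getD i 0 ≤ 0 := by
    decide
  obtain ⟨hkT, hkneg⟩ := hwords k hk
  have ha : w0a = S.prodW w0WordD6 :=
    S.isLongest_eq_prodW_of_coords hC (T := Finset.Icc 1 7 \ {1}) Finset.sdiff_subset
      (by simpa using hw0a) (by decide) (by decide)
  have hb : w0b = S.prodW (w0Word k) :=
    S.isLongest_eq_prodW_of_coords hC (T := Finset.Icc 1 7 \ {1, k}) Finset.sdiff_subset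
      (by simpa using hw0b) hkT hkneg
  have hkI : ∀ i ∈ w0Word k, i ∈ Finset.Icc 1 7 := fun i hi => Finset.sdiff_subset (hkT i hi)
  have hI : ∀ i ∈ v4Word.reverse ++ w0WordD6 ++ w0Word k, i ∈ Finset.Icc 1 7 := by
    simp only [List.forall_mem_append]
    exact ⟨⟨by decide, by decide⟩, hkI⟩
  subst ha hb
  rw [show (v4E7 S)⁻¹ = S.prodW v4Word.reverse from S.inv_prodW _, ← prodW_append_apply,
    ← prodW_append_apply, ← h₁, ← h₂]
  exact ⟨S.prodW_apply_a hC hkI (by decide), S.prodW_apply_a hC hI (by decide)⟩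

end RootSystemWithBase

end E7

/-- In type `E_7`, with `v_4` as above:
(1) `w_{0, S∖{α_1, α_2}}(α_1) = α_1 + α_3 + α_4 + α_5 + α_6 + α_7` and
`v_4⁻¹ w_{0, S∖{α_1}} w_{0, S∖{α_1, α_2}}(α_1) = α_5 + α_6 + α_7`;
(2) `w_{0, S∖{α_1, α_3}}(α_1) = α_1` and
`v_4⁻¹ w_{0, S∖{α_1}} w_{0, S∖{α_1, α_3}}(α_1) = α_1 + 2α_2 + 2α_3 + 3α_4 + 3α_5 + 2α_6 + α_7`;
(3) `w_{0, S∖{α_1, α_4}}(α_1) = α_1 + α_3` and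
`v_4⁻¹ w_{0, S∖{α_1}} w_{0, S∖{α_1, α_4}}(α_1) = α_1 + α_2 + 2α_3 + 2α_4 + 2α_5 + 2α_6 + α_7`;
(4) `w_{0, S∖{α_1, α_5}}(α_1) = α_1 + α_2 + α_3 + α_4` and
`v_4⁻¹ w_{0, S∖{α_1}} w_{0, S∖{α_1, α_5}}(α_1) = α_1 + α_2 + 2α_3 + 2α_4 + 2α_5 + α_6`;
(5) `w_{0, S∖{α_1, α_6}}(α_1) = α_1 + α_2 + 2α_3 + 2α_4 + α_5` and
`v_4⁻¹ w_{0, S∖{α_1}} w_{0, S∖{α_1, α_6}}(α_1) = α_1 + α_3`. -/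
theorem statement15 (S : RootSystemWithBase V 7)
    (hE : ∀ i ∈ Finset.Icc 1 7, ∀ j ∈ Finset.Icc 1 7,
      ⟪S.a i, S.a j⟫ = if i = j then 2 else if adjE i j then -1 else 0)
    (w0a : V ≃ₗᵢ[ℝ] V) (hw0a : S.IsLongest (Set.Icc 1 7 \ {1}) w0a) :
    (∀ w0b : V ≃ₗᵢ[ℝ] V, S.IsLongest (Set.Icc 1 7 \ {1, 2}) w0b →
      w0b (S.a 1) = S.a 1 + S.a 3 + S.a 4 + S.a 5 + S.a 6 + S.a 7 ∧
      (v4E7 S)⁻¹ (w0a (w0b (S.a 1))) = S.a 5 + S.a 6 + S.a 7) ∧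
    (∀ w0b : V ≃ₗᵢ[ℝ] V, S.IsLongest (Set.Icc 1 7 \ {1, 3}) w0b →
      w0b (S.a 1) = S.a 1 ∧
      (v4E7 S)⁻¹ (w0a (w0b (S.a 1))) =
        S.a 1 + (2 : ℝ) • S.a 2 + (2 : ℝ) • S.a 3 + (3 : ℝ) • S.a 4 + (3 : ℝ) • S.a 5 +
          (2 : ℝ) • S.a 6 + S.a 7) ∧
    (∀ w0b : V ≃ₗᵢ[ℝ] V, S.IsLongest (Set.Icc 1 7 \ {1, 4}) w0b →
      w0b (S.a 1) = S.a 1 + S.a 3 ∧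
      (v4E7 S)⁻¹ (w0a (w0b (S.a 1))) =
        S.a 1 + S.a 2 + (2 : ℝ) • S.a 3 + (2 : ℝ) • S.a 4 + (2 : ℝ) • S.a 5 +
          (2 : ℝ) • S.a 6 + S.a 7) ∧
    (∀ w0b : V ≃ₗᵢ[ℝ] V, S.IsLongest (Set.Icc 1 7 \ {1, 5}) w0b →
      w0b (S.a 1) = S.a 1 + S.a 2 + S.a 3 + S.a 4 ∧
      (v4E7 S)⁻¹ (w0a (w0b (S.a 1))) =
        S.a 1 + S.a 2 + (2 : ℝ) • S.a 3 + (2 : ℝ) • S.a 4 + (2 : ℝ) • S.a 5 + S.a 6) ∧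
    (∀ w0b : V ≃ₗᵢ[ℝ] V, S.IsLongest (Set.Icc 1 7 \ {1, 6}) w0b →
      w0b (S.a 1) = S.a 1 + S.a 2 + (2 : ℝ) • S.a 3 + (2 : ℝ) • S.a 4 + S.a 5 ∧
      (v4E7 S)⁻¹ (w0a (w0b (S.a 1))) = S.a 1 + S.a 3) := by
  have hC := S.hasCartanMatrix_cartanE7 hE
  set_option maxRecDepth 10000 in
  refine ⟨fun w0b hw0b => ?_, fun w0b hw0b => ?_, fun w0b hw0b => ?_, fun w0b hw0b => ?_,
    fun w0b hw0b => ?_⟩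
  · simpa [S.ofCoords_E7] using S.apply_a_one_eq_ofCoords hC hw0a (by decide) hw0b
      (L₁ := [0, 1, 0, 1, 1, 1, 1, 1]) (L₂ := [0, 0, 0, 0, 0, 1, 1, 1]) (by decide) (by decide)
  · simpa [S.ofCoords_E7] using S.apply_a_one_eq_ofCoords hC hw0a (by decide) hw0b
      (L₁ := [0, 1, 0, 0, 0, 0, 0, 0]) (L₂ := [0, 1, 2, 2, 3, 3, 2, 1]) (by decide) (by decide)
  · simpa [S.ofCoords_E7] using S.apply_a_one_eq_ofCoords hC hw0a (by decide) hw0b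
      (L₁ := [0, 1, 0, 1, 0, 0, 0, 0]) (L₂ := [0, 1, 1, 2, 2, 2, 2, 1]) (by decide) (by decide)
  · simpa [S.ofCoords_E7] using S.apply_a_one_eq_ofCoords hC hw0a (by decide) hw0b
      (L₁ := [0, 1, 1, 1, 1, 0, 0, 0]) (L₂ := [0, 1, 1, 2, 2, 2, 1, 0]) (by decide) (by decide)
  · simpa [S.ofCoords_E7] using S.apply_a_one_eq_ofCoords hC hw0a (by decide) hw0b
      (L₁ := [0, 1, 1, 2, 2, 1, 0, 0]) (L₂ := [0, 1, 0, 1, 0, 0, 0, 0]) (by decide) (by decide)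

end PaperFormal
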